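/- For λ ∈ [-1,1], the Gaussian second quantization operator Γ(λ), defined on Hermite expansions by Γ(λ)(Σ γ_j h_j) = Σ λ^j γ_j h_j, extends to a bounded linear operator on L^p(ℝ, μ) for every p ∈ [1, ∞] with operator norm equal to one. -/

import Mathlib

open MeasureTheory ProbabilityTheory
open scoped ENNReal

noncomputable def gaussμ : Measure ℝ := gaussianReal 0 1

noncomputable def Herm (n : ℕ) (x : ℝ) : ℝ := Polynomial.aeval x (Polynomial.hermite n)

/-- The Gaussian second quantization (Ornstein–Uhlenbeck / Mehler) operator `Γ(λ)`,
given by the Mehler formula `(Γ(λ)f)(x) = ∫ f(λx + √(1-λ²)y) dμ(y)`. -/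
noncomputable def gaussOU (l : ℝ) (f : ℝ → ℝ) (x : ℝ) : ℝ :=
  ∫ y, f (l * x + Real.sqrt (1 - l ^ 2) * y) ∂gaussμ

/-!
Put `s = √(1 - λ²)` and `S(x, y) = λx + sy`. Since the convolution of centred Gaussians of
variances `λ²` and `s²` is `μ`, `S` pushes `μ ⊗ μ` forward to `μ`, and `Γ(λ)f(x)` is the average of
`f ∘ S` over the fibre `{x} × ℝ`. Jensen's inequality on each fibre then makes `Γ(λ)` a contraction
of every `L^p(μ)`, and it fixes the constants, so its norm is one.

For the eigenvalue relation let `I_j(c) = ∫ h_j(c + sy) dμ(y)`. The recurrence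
`h_{j+2} = x h_{j+1} - (j+1) h_j`, the identity `h_{j+1}' = (j+1) h_j` and Gaussian integration by
parts `∫ y P(y) dμ(y) = ∫ P' dμ` give `I_{j+2}(c) = c I_{j+1}(c) - (1 - s²)(j+1) I_j(c)`; since
`1 - s² = λ²`, induction on `j` yields `I_j(λx) = λ^j h_j(x)`.
-/

open Real Polynomial
open scoped NNReal

namespace MeasureTheory

variable {α β E : Type*} [MeasurableSpace α] [MeasurableSpace β]
  [NormedAddCommGroup E] [NormedSpace ℝ E] {μ : Measure α} {ν : Measure β}

lemma enorm_integral_rpow_le_lintegral_enorm_rpow [IsProbabilityMeasure ν] (g : β → E)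
    {q : ℝ} (hq : 1 ≤ q) : ‖∫ y, g y ∂ν‖ₑ ^ q ≤ ∫⁻ y, ‖g y‖ₑ ^ q ∂ν := by
  have hq0 : 0 < q := zero_lt_one.trans_le hq
  by_cases hg : AEStronglyMeasurable g ν
  swap
  · simp [integral_non_aestronglyMeasurable hg, ENNReal.zero_rpow_of_pos hq0]
  have hL1 : ‖∫ y, g y ∂ν‖ₑ ≤ eLpNorm g (ENNReal.ofReal q) ν :=
    calc ‖∫ y, g y ∂ν‖ₑ ≤ ∫⁻ y, ‖g y‖ₑ ∂ν := enorm_integral_le_lintegral_enorm g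
      _ = eLpNorm g 1 ν := eLpNorm_one_eq_lintegral_enorm.symm
      _ ≤ eLpNorm g (ENNReal.ofReal q) ν :=
        eLpNorm_le_eLpNorm_of_exponent_le (by simpa using hq) hg
  calc ‖∫ y, g y ∂ν‖ₑ ^ q ≤ eLpNorm g (ENNReal.ofReal q) ν ^ q :=
        ENNReal.rpow_le_rpow hL1 hq0.le
    _ = ∫⁻ y, ‖g y‖ₑ ^ q ∂ν := by
      rw [eLpNorm_eq_lintegral_rpow_enorm_toReal (by simpa using hq0) ENNReal.ofReal_ne_top,
        ENNReal.toReal_ofReal hq0.le, ← ENNReal.rpow_mul, one_div_mul_cancel hq0.ne',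
        ENNReal.rpow_one]

lemma eLpNormEssSup_integral_prod_right_le [IsProbabilityMeasure ν] (F : α × β → E) :
    eLpNormEssSup (fun x => ∫ y, F (x, y) ∂ν) μ ≤ eLpNormEssSup F (μ.prod ν) := by
  have hbound := Measure.ae_ae_of_ae_prod (ae_le_eLpNormEssSup (f := F) (μ := μ.prod ν))
  refine essSup_le_of_ae_le _ ?_
  filter_upwards [hbound] with x hx
  calc ‖∫ y, F (x, y) ∂ν‖ₑ ≤ ∫⁻ y, ‖F (x, y)‖ₑ ∂ν := enorm_integral_le_lintegral_enorm _
    _ ≤ ∫⁻ _, eLpNormEssSup F (μ.prod ν) ∂ν := lintegral_mono_ae hx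
    _ = eLpNormEssSup F (μ.prod ν) := by simp

lemma eLpNorm_integral_prod_right_le [IsProbabilityMeasure ν] {F : α × β → E}
    (hF : AEStronglyMeasurable F (μ.prod ν)) {p : ℝ≥0∞} (hp : 1 ≤ p) :
    eLpNorm (fun x => ∫ y, F (x, y) ∂ν) p μ ≤ eLpNorm F p (μ.prod ν) := by
  rcases eq_or_ne p ∞ with rfl | hp_top
  · simpa only [eLpNorm_exponent_top] using eLpNormEssSup_integral_prod_right_le F
  have hp0 : p ≠ 0 := (zero_lt_one.trans_le hp).ne'
  have hq : 1 ≤ p.toReal := by simpa using ENNReal.toReal_mono hp_top hp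
  rw [eLpNorm_eq_lintegral_rpow_enorm_toReal hp0 hp_top,
    eLpNorm_eq_lintegral_rpow_enorm_toReal hp0 hp_top]
  gcongr ?_ ^ _
  calc ∫⁻ x, ‖∫ y, F (x, y) ∂ν‖ₑ ^ p.toReal ∂μ
      ≤ ∫⁻ x, ∫⁻ y, ‖F (x, y)‖ₑ ^ p.toReal ∂ν ∂μ :=
        lintegral_mono fun x => enorm_integral_rpow_le_lintegral_enorm_rpow _ hq
    _ = ∫⁻ z, ‖F z‖ₑ ^ p.toReal ∂μ.prod ν :=
        (lintegral_prod _ (hF.enorm.pow_const _)).symm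

section FiberAverage

variable {γ : Type*} [MeasurableSpace γ] {ρ : Measure γ} {S : α × β → γ}

noncomputable def fiberAverage (S : α × β → γ) (ν : Measure β) (f : γ → E) (x : α) : E :=
  ∫ y, f (S (x, y)) ∂ν

lemma fiberAverage_congr_ae [SFinite ν] (hS : MeasurePreserving S (μ.prod ν) ρ) {f g : γ → E}
    (h : f =ᵐ[ρ] g) : fiberAverage S ν f =ᵐ[μ] fiberAverage S ν g := by
  have hcomp : f ∘ S =ᵐ[μ.prod ν] g ∘ S :=
    ae_eq_comp hS.measurable.aemeasurable (hS.map_eq.symm ▸ h)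
  filter_upwards [Measure.ae_ae_of_ae_prod hcomp] with x hx
  exact integral_congr_ae hx

lemma fiberAverage_add_ae [SFinite μ] [SFinite ν] (hS : MeasurePreserving S (μ.prod ν) ρ)
    {f g : γ → E} (hf : Integrable f ρ) (hg : Integrable g ρ) :
    fiberAverage S ν (f + g) =ᵐ[μ] fiberAverage S ν f + fiberAverage S ν g := by
  filter_upwards [(hS.integrable_comp_of_integrable hf).prod_right_ae,
    (hS.integrable_comp_of_integrable hg).prod_right_ae] with x hfx hgx
  exact integral_add hfx hgx

variable [IsProbabilityMeasure ν]

lemma eLpNorm_fiberAverage_le (hS : MeasurePreserving S (μ.prod ν) ρ) {f : γ → E}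
    (hf : AEStronglyMeasurable f ρ) {p : ℝ≥0∞} (hp : 1 ≤ p) :
    eLpNorm (fiberAverage S ν f) p μ ≤ eLpNorm f p ρ :=
  (eLpNorm_integral_prod_right_le (hf.comp_measurePreserving hS) hp).trans_eq
    (eLpNorm_comp_measurePreserving hf hS)

lemma MemLp.fiberAverage (hS : MeasurePreserving S (μ.prod ν) ρ) {f : γ → E}
    {p : ℝ≥0∞} (hp : 1 ≤ p) (hf : MemLp f p ρ) : MemLp (fiberAverage S ν f) p μ :=
  ⟨(hf.1.comp_measurePreserving hS).integral_prod_right',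
    (eLpNorm_fiberAverage_le hS hf.1 hp).trans_lt hf.2⟩

lemma MeasurePreserving.measure_univ_of_prod (hS : MeasurePreserving S (μ.prod ν) ρ) :
    ρ Set.univ = μ Set.univ := by
  rw [← hS.measure_preimage MeasurableSet.univ.nullMeasurableSet, Set.preimage_univ,
    ← Set.univ_prod_univ, Measure.prod_prod, measure_univ (μ := ν), mul_one]

variable [IsFiniteMeasure μ]

lemma MeasurePreserving.isFiniteMeasure_of_prod (hS : MeasurePreserving S (μ.prod ν) ρ) :
    IsFiniteMeasure ρ :=
  hS.map_eq ▸ Measure.isFiniteMeasure_map _ S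

variable (hS : MeasurePreserving S (μ.prod ν) ρ) (p : ℝ≥0∞) [Fact (1 ≤ p)]

noncomputable def fiberAverageCLM : Lp E p ρ →L[ℝ] Lp E p μ :=
  have hp : 1 ≤ p := Fact.out
  have := hS.isFiniteMeasure_of_prod
  LinearMap.mkContinuous
    { toFun := fun f => ((Lp.memLp f).fiberAverage hS hp).toLp _
      map_add' := fun f g => by
        refine Lp.ext <| (MemLp.coeFn_toLp _).trans ?_
        refine ((fiberAverage_congr_ae hS (Lp.coeFn_add f g)).trans
          (fiberAverage_add_ae hS ((Lp.memLp f).integrable hp) ((Lp.memLp g).integrable hp))).trans ?_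
        exact ((Lp.coeFn_add _ _).trans ((MemLp.coeFn_toLp _).add (MemLp.coeFn_toLp _))).symm
      map_smul' := fun c f => by
        refine Lp.ext <| (MemLp.coeFn_toLp _).trans ?_
        refine (fiberAverage_congr_ae hS (Lp.coeFn_smul c f)).trans ?_
        rw [show fiberAverage S ν (c • ⇑f) = c • fiberAverage S ν f from
          funext fun _ => integral_smul c _]
        exact ((Lp.coeFn_smul _ _).trans ((MemLp.coeFn_toLp _).const_smul c)).symm }
    1 fun f => by
      rw [one_mul]
      refine (Lp.norm_toLp _ ((Lp.memLp f).fiberAverage hS hp)).trans_le ?_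
      rw [Lp.norm_def]
      exact ENNReal.toReal_mono (Lp.eLpNorm_ne_top f)
        (eLpNorm_fiberAverage_le hS (Lp.aestronglyMeasurable f) hp)

lemma fiberAverageCLM_ae_eq (f : Lp E p ρ) :
    fiberAverageCLM hS p f =ᵐ[μ] fiberAverage S ν f :=
  ((Lp.memLp f).fiberAverage hS Fact.out).coeFn_toLp

lemma norm_fiberAverageCLM_le : ‖fiberAverageCLM (E := E) hS p‖ ≤ 1 := by
  unfold fiberAverageCLM
  exact LinearMap.mkContinuous_norm_le _ zero_le_one _

lemma norm_fiberAverageCLM [NeZero μ] [Nontrivial E] [CompleteSpace E] :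
    ‖fiberAverageCLM (E := E) hS p‖ = 1 := by
  have := hS.isFiniteMeasure_of_prod
  have hρμ := hS.measure_univ_of_prod
  have : NeZero ρ := ⟨fun h => NeZero.ne μ (Measure.measure_univ_eq_zero.1 (by simp [← hρμ, h]))⟩
  obtain ⟨c, hc⟩ := exists_ne (0 : E)
  have hfix : fiberAverageCLM hS p (Lp.const p ρ c) = Lp.const p μ c := by
    refine Lp.ext <| (fiberAverageCLM_ae_eq hS p _).trans ?_
    refine (fiberAverage_congr_ae hS (Lp.coeFn_const ..)).trans ?_
    refine .trans ?_ (Lp.coeFn_const ..).symm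
    exact .of_eq <| funext fun _ => by simp [fiberAverage]
  have hp0 : p ≠ 0 := (zero_lt_one.trans_le (Fact.out : 1 ≤ p)).ne'
  have hnorm : ‖Lp.const p μ c‖ = ‖Lp.const p ρ c‖ := by
    rw [Lp.norm_const p μ c hp0, Lp.norm_const p ρ c hp0, measureReal_def, measureReal_def, hρμ]
  have hpos : 0 < ‖Lp.const p ρ c‖ := by
    rw [Lp.norm_const p ρ c hp0]
    have hρ : 0 < ρ.real Set.univ := by simp [measureReal_def, ENNReal.toReal_pos_iff, NeZero.ne ρ]
    exact mul_pos (norm_pos_iff.2 hc) (rpow_pos_of_pos hρ _)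
  refine le_antisymm (norm_fiberAverageCLM_le hS p) ?_
  have := (fiberAverageCLM hS p).le_opNorm (Lp.const p ρ c)
  rw [hfix, hnorm] at this
  exact (le_mul_iff_one_le_left hpos).1 this

end FiberAverage

end MeasureTheory

namespace Polynomial

theorem derivative_hermite_succ (n : ℕ) :
    derivative (hermite (n + 1)) = (n + 1 : ℤ[X]) * hermite n := by
  induction n with
  | zero => simp
  | succ n ih =>
    rw [hermite_succ (n + 1), derivative_sub, derivative_mul, derivative_X, one_mul, ih,
      derivative_mul, hermite_succ n]
    simp only [derivative_add, derivative_natCast, derivative_one]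
    push_cast
    ring

theorem hermite_add_two (n : ℕ) :
    hermite (n + 2) = X * hermite (n + 1) - (n + 1 : ℤ[X]) * hermite n := by
  rw [hermite_succ (n + 1), derivative_hermite_succ]

theorem eval_comp_C_add_C_mul_X (Q : ℝ[X]) (c s x : ℝ) :
    (Q.comp (C c + C s * X)).eval x = Q.eval (c + s * x) := by
  simp

theorem aeval_hermite_add_two {A : Type*} [CommRing A] (n : ℕ) (t : A) :
    aeval t (hermite (n + 2)) = t * aeval t (hermite (n + 1)) - (n + 1) * aeval t (hermite n) := by
  rw [hermite_add_two]
  simp only [map_sub, map_mul, aeval_X, map_add, map_natCast, map_one]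

end Polynomial

namespace ProbabilityTheory

lemma gaussianReal_prod_map_linear (a b m₁ m₂ : ℝ) (v₁ v₂ : ℝ≥0) :
    ((gaussianReal m₁ v₁).prod (gaussianReal m₂ v₂)).map (fun z => a * z.1 + b * z.2) =
      gaussianReal (a * m₁ + b * m₂) (⟨a ^ 2, sq_nonneg a⟩ * v₁ + ⟨b ^ 2, sq_nonneg b⟩ * v₂) := by
  have hsplit : (fun z : ℝ × ℝ => a * z.1 + b * z.2) =
      (fun z : ℝ × ℝ => z.1 + z.2) ∘ Prod.map (a * ·) (b * ·) := rfl
  rw [hsplit, ← Measure.map_map (by fun_prop) (by fun_prop), ← Measure.map_prod_map _ _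
    (by fun_prop) (by fun_prop), gaussianReal_map_const_mul, gaussianReal_map_const_mul]
  exact gaussianReal_conv_gaussianReal

lemma measurePreserving_gaussianReal_rotation {a b : ℝ} (hab : a ^ 2 + b ^ 2 = 1) (v : ℝ≥0) :
    MeasurePreserving (fun z : ℝ × ℝ => a * z.1 + b * z.2)
      ((gaussianReal 0 v).prod (gaussianReal 0 v)) (gaussianReal 0 v) := by
  refine ⟨by fun_prop, ?_⟩
  rw [gaussianReal_prod_map_linear, mul_zero, mul_zero, add_zero]
  congr 1
  ext
  change a ^ 2 * (v : ℝ) + b ^ 2 * v = v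
  linear_combination (v : ℝ) * hab

lemma integrable_eval_gaussianReal (P : ℝ[X]) (m : ℝ) (v : ℝ≥0) :
    Integrable (fun x => P.eval x) (gaussianReal m v) := by
  induction P using Polynomial.induction_on' with
  | add P Q hP hQ => simp only [eval_add]; exact hP.add hQ
  | monomial n a =>
    simp only [eval_monomial]
    refine Integrable.const_mul ?_ a
    rcases eq_or_ne n 0 with rfl | hn
    · simp
    refine ((memLp_id_gaussianReal n).integrable_norm_pow hn).mono' (by fun_prop) ?_
    exact .of_forall fun x => by simp [norm_pow]

lemma hasDerivAt_gaussianPDFReal_zero_one (x : ℝ) :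
    HasDerivAt (gaussianPDFReal 0 1) (-x * gaussianPDFReal 0 1 x) x := by
  have hφ : gaussianPDFReal 0 1 = fun y => (√(2 * π))⁻¹ * rexp (-y ^ 2 / 2) := by
    ext y; simp [gaussianPDFReal]
  rw [hφ]
  exact (((hasDerivAt_pow 2 x).neg.div_const 2).exp.const_mul (√(2 * π))⁻¹).congr_deriv
    (by simp; ring)

lemma integrable_gaussianPDFReal_mul_eval (P : ℝ[X]) :
    Integrable (fun x => gaussianPDFReal 0 1 x * P.eval x) := by
  have h := integrable_eval_gaussianReal P 0 1
  rw [gaussianReal_of_var_ne_zero 0 one_ne_zero, integrable_withDensity_iff_integrable_smul'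
    (measurable_gaussianPDF 0 1) (.of_forall fun _ => gaussianPDF_lt_top)] at h
  simpa [toReal_gaussianPDF] using h

lemma integral_mul_eval_gaussianReal (P : ℝ[X]) :
    ∫ x, x * P.eval x ∂gaussianReal 0 1 = ∫ x, P.derivative.eval x ∂gaussianReal 0 1 := by
  have hderiv (x : ℝ) : HasDerivAt (fun x => gaussianPDFReal 0 1 x * P.eval x)
      (gaussianPDFReal 0 1 x * (P.derivative - X * P).eval x) x := by
    refine ((hasDerivAt_gaussianPDFReal_zero_one x).mul (P.hasDerivAt x)).congr_deriv ?_
    rw [eval_sub, eval_mul, eval_X]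
    ring
  have h : ∫ x, (P.derivative - X * P).eval x ∂gaussianReal 0 1 = 0 := by
    rw [integral_gaussianReal_eq_integral_smul one_ne_zero]
    exact integral_eq_zero_of_hasDerivAt_of_integrable hderiv
      (integrable_gaussianPDFReal_mul_eval _) (integrable_gaussianPDFReal_mul_eval P)
  have hXP := integrable_eval_gaussianReal (X * P) 0 1
  simp only [eval_sub, eval_mul, eval_X] at h hXP
  rwa [integral_sub (integrable_eval_gaussianReal _ 0 1) hXP, sub_eq_zero, eq_comm] at h

lemma integrable_eval_affine_gaussianReal (Q : ℝ[X]) (c s : ℝ) :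
    Integrable (fun y => Q.eval (c + s * y)) (gaussianReal 0 1) :=
  (integrable_eval_gaussianReal (Q.comp (C c + C s * X)) 0 1).congr
    (.of_forall fun y => eval_comp_C_add_C_mul_X Q c s y)

lemma integrable_mul_eval_affine_gaussianReal (Q : ℝ[X]) (c s : ℝ) :
    Integrable (fun y => y * Q.eval (c + s * y)) (gaussianReal 0 1) :=
  (integrable_eval_gaussianReal (X * Q.comp (C c + C s * X)) 0 1).congr
    (.of_forall fun y => by simp only [eval_mul, eval_X, eval_comp_C_add_C_mul_X])

lemma integral_mul_eval_affine_gaussianReal (Q : ℝ[X]) (c s : ℝ) :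
    ∫ y, y * Q.eval (c + s * y) ∂gaussianReal 0 1 =
      s * ∫ y, Q.derivative.eval (c + s * y) ∂gaussianReal 0 1 := by
  have h := integral_mul_eval_gaussianReal (Q.comp (C c + C s * X))
  have hderiv : derivative (C c + C s * X) = C s := by simp
  simp only [derivative_comp, hderiv, eval_mul, eval_C, eval_comp_C_add_C_mul_X] at h
  rw [h, integral_const_mul]

lemma integral_mul_aeval_hermite_succ_affine (c s : ℝ) (n : ℕ) :
    ∫ y, y * aeval (c + s * y) (hermite (n + 1)) ∂gaussianReal 0 1 =
      s * ((n + 1) * ∫ y, aeval (c + s * y) (hermite n) ∂gaussianReal 0 1) := by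
  simp only [← eval_map_algebraMap]
  rw [integral_mul_eval_affine_gaussianReal]
  congr 1
  rw [← integral_const_mul]
  simp only [derivative_map, derivative_hermite_succ, Polynomial.map_mul, eval_mul]
  simp

lemma integral_aeval_hermite_add_two_affine (c s : ℝ) (n : ℕ) :
    ∫ y, aeval (c + s * y) (hermite (n + 2)) ∂gaussianReal 0 1 =
      c * ∫ y, aeval (c + s * y) (hermite (n + 1)) ∂gaussianReal 0 1
        - (1 - s ^ 2) * (n + 1) * ∫ y, aeval (c + s * y) (hermite n) ∂gaussianReal 0 1 := by
  have hint (k : ℕ) : Integrable (fun y => aeval (c + s * y) (hermite k)) (gaussianReal 0 1) :=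
    (integrable_eval_affine_gaussianReal _ c s).congr
      (.of_forall fun _ => eval_map_algebraMap _ _)
  have hmul_int : Integrable (fun y => y * aeval (c + s * y) (hermite (n + 1)))
      (gaussianReal 0 1) :=
    (integrable_mul_eval_affine_gaussianReal ((hermite (n + 1)).map (algebraMap ℤ ℝ)) c s).congr
      (.of_forall fun _ => by simp only [eval_map_algebraMap])
  calc ∫ y, aeval (c + s * y) (hermite (n + 2)) ∂gaussianReal 0 1
      = ∫ y, (c * aeval (c + s * y) (hermite (n + 1))
          + s * (y * aeval (c + s * y) (hermite (n + 1)))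
          - (n + 1) * aeval (c + s * y) (hermite n)) ∂gaussianReal 0 1 := by
        congr 1; ext y; rw [aeval_hermite_add_two]; ring
    _ = c * ∫ y, aeval (c + s * y) (hermite (n + 1)) ∂gaussianReal 0 1
          + s * ∫ y, y * aeval (c + s * y) (hermite (n + 1)) ∂gaussianReal 0 1
          - (n + 1) * ∫ y, aeval (c + s * y) (hermite n) ∂gaussianReal 0 1 := by
        rw [integral_sub, integral_add, integral_const_mul, integral_const_mul,
          integral_const_mul]
        · exact (hint _).const_mul _
        · exact hmul_int.const_mul _
        · exact ((hint _).const_mul _).add (hmul_int.const_mul _)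
        · exact (hint _).const_mul _
    _ = _ := by
        rw [integral_mul_aeval_hermite_succ_affine]
        ring

theorem integral_aeval_hermite_gaussianReal {l s : ℝ} (hls : l ^ 2 + s ^ 2 = 1) (x : ℝ) (n : ℕ) :
    ∫ y, aeval (l * x + s * y) (hermite n) ∂gaussianReal 0 1 = l ^ n * aeval x (hermite n) := by
  induction n using Nat.twoStepInduction with
  | zero => simp
  | one =>
    have hX : Integrable (fun y : ℝ => y) (gaussianReal 0 1) := by
      simpa using integrable_eval_gaussianReal X 0 1
    simp only [hermite_one, aeval_X]
    rw [integral_add (integrable_const _) (hX.const_mul s), integral_const, integral_const_mul,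
      integral_id_gaussianReal]
    simp
  | more n ih₀ ih₁ =>
    rw [integral_aeval_hermite_add_two_affine, ih₀, ih₁, aeval_hermite_add_two,
      show 1 - s ^ 2 = l ^ 2 by linarith]
    ring

end ProbabilityTheory

instance : IsProbabilityMeasure gaussμ := inferInstanceAs (IsProbabilityMeasure (gaussianReal 0 1))

/-- For `λ ∈ [-1,1]`, `Γ(λ)` acts on Hermite expansions by `Γ(λ) h_j = λ^j h_j`, and it
extends to a bounded linear operator on `L^p(ℝ, μ)` for every `p ∈ [1,∞]` with norm one. -/
theorem stmt1 (l : ℝ) (hl : l ∈ Set.Icc (-1 : ℝ) 1) (p : ℝ≥0∞) [Fact (1 ≤ p)] :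
    (∀ j : ℕ, ∀ x : ℝ, gaussOU l (Herm j) x = l ^ j * Herm j x) ∧
    ∃ T : Lp ℝ p gaussμ →L[ℝ] Lp ℝ p gaussμ, ‖T‖ = 1 ∧
      ∀ (f : ℝ → ℝ) (hf : MemLp f p gaussμ),
        (T (hf.toLp f) : ℝ → ℝ) =ᵐ[gaussμ] gaussOU l f := by
  have hls : l ^ 2 + √(1 - l ^ 2) ^ 2 = 1 := by
    rw [sq_sqrt (by nlinarith [hl.1, hl.2])]
    ring
  have hS : MeasurePreserving (fun z : ℝ × ℝ => l * z.1 + √(1 - l ^ 2) * z.2)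
      (gaussμ.prod gaussμ) gaussμ :=
    measurePreserving_gaussianReal_rotation hls 1
  refine ⟨fun j x => integral_aeval_hermite_gaussianReal hls x j,
    fiberAverageCLM hS p, norm_fiberAverageCLM hS p, fun f hf => ?_⟩
  exact (fiberAverageCLM_ae_eq hS p _).trans (fiberAverage_congr_ae hS hf.coeFn_toLp)
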